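/- arXiv:2406.03504 — 3 statements merged into one kernel-verified Lean document; each statement's English description precedes it below -/
import Mathlib

section
/- Let h: ℝ → ℝ ∪ {+∞} be proper, closed, convex, with h(0) = 0 and 0 an accumulation point of dom(h), and let λ > 0. For a node ν = (S₀, S₁, S•) partitioning {1,…,n}, define g^ν(x) = λ‖x‖₀ + Σᵢ h(xᵢ) + η(x ∈ X^ν) where X^ν = {x : x_{S₀} = 0, x_{S₁} ≠ 0 componentwise}. Then (g^ν)* is separable and its i-th coordinate function equals: 0 if i ∈ S₀; h*(v) − λ if i ∈ S₁; max(h*(v) − λ, 0) if i ∈ S•. -/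
/-!
Every term of `g^ν`, the constraint `x ∈ X^ν` included, acts coordinatewise, so
`g^ν(x) = ∑ᵢ φᵢ(xᵢ)` and, since a supremum over `ℝⁿ` of a separable sum is the sum of the
one-dimensional suprema, `(g^ν)* = ∑ᵢ φᵢ*`. Splitting `φᵢ*(v) = sup_t (v t - φᵢ t)` into `t = 0`
(value `0`, or `⊥` when `i ∈ S₁`) and `t ≠ 0` (value `v t - h t - λ`, or `⊥` when `i ∈ S₀`) gives
the three cases, once one knows that `sup_{t ≠ 0} (v t - h t) = h*(v)`. That holds because
convexity and `h 0 = 0` give `h (a x₀) ≤ a h(x₀)` for a point `x₀ ≠ 0` of the domain, so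
`v (a x₀) - h (a x₀) ≥ a (v x₀ - h x₀)`, which tends to `0 = v·0 - h 0` as `a → 0⁺`.
-/

open Classical

noncomputable section

def EDom (ω : ℝ → EReal) : Set ℝ := {x | ω x < ⊤}

def EProper (ω : ℝ → EReal) : Prop := (∀ x, ω x ≠ ⊥) ∧ ∃ x, ω x ≠ ⊤

def EConvex (ω : ℝ → EReal) : Prop :=
  ∀ x y a b : ℝ, 0 ≤ a → 0 ≤ b → a + b = 1 →
    ω (a * x + b * y) ≤ (a : EReal) * ω x + (b : EReal) * ω y

def EClosed (ω : ℝ → EReal) : Prop := LowerSemicontinuous ω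

/-- Convex conjugate of a function `ℝ → EReal`. -/
def conj (ω : ℝ → EReal) (v : ℝ) : EReal := ⨆ x : ℝ, ((v * x : ℝ) : EReal) - ω x

/-- Convex conjugate of a function on `ℝⁿ`. -/
def conjN {n : ℕ} (g : (Fin n → ℝ) → EReal) (v : Fin n → ℝ) : EReal :=
  ⨆ x : Fin n → ℝ, ((∑ i, v i * x i : ℝ) : EReal) - g x

/-- The ℓ₀-"norm" of a vector: number of nonzero entries. -/
def norm0N {n : ℕ} (x : Fin n → ℝ) : ℕ :=
  (Finset.univ.filter fun i => x i ≠ 0).card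

/-- Convex indicator: `0` if the condition holds, `⊤` otherwise. -/
def ind (p : Prop) : EReal := if p then 0 else ⊤

/-- The regularizer `g^ν` at a node `ν = (S₀, S₁, S•)`. -/
def gnode {n : ℕ} (h : ℝ → EReal) (lam : ℝ) (S0 S1 : Finset (Fin n))
    (x : Fin n → ℝ) : EReal :=
  ((lam * (norm0N x : ℝ) : ℝ) : EReal) + (∑ i, h (x i))
    + ind ((∀ i ∈ S0, x i = 0) ∧ (∀ i ∈ S1, x i ≠ 0))

namespace EReal

lemma coe_finset_sum {ι : Type*} (s : Finset ι) (r : ι → ℝ) :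
    ((∑ i ∈ s, r i : ℝ) : EReal) = ∑ i ∈ s, (r i : EReal) :=
  map_sum (⟨⟨Real.toEReal, coe_zero⟩, coe_add⟩ : ℝ →+ EReal) r s

lemma finset_sum_ne_bot {ι : Type*} {s : Finset ι} {g : ι → EReal} (hg : ∀ i ∈ s, g i ≠ ⊥) :
    ∑ i ∈ s, g i ≠ ⊥ :=
  (WithBot.sum_lt_bot (M := WithTop ℝ) hg).ne'

lemma neg_finset_sum {ι : Type*} {s : Finset ι} {g : ι → EReal} (hg : ∀ i ∈ s, g i ≠ ⊥) :
    -∑ i ∈ s, g i = ∑ i ∈ s, -g i := by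
  induction s using Finset.induction_on with
  | empty => simp
  | insert a s has ih =>
    rw [Finset.forall_mem_insert] at hg
    rw [Finset.sum_insert has, Finset.sum_insert has, neg_add (.inl hg.1)
      (.inr (finset_sum_ne_bot hg.2)), sub_eq_add_neg, ih hg.2]

lemma coe_finset_sum_sub_sum {ι : Type*} (s : Finset ι) (r : ι → ℝ) {g : ι → EReal}
    (hg : ∀ i ∈ s, g i ≠ ⊥) :
    ((∑ i ∈ s, r i : ℝ) : EReal) - ∑ i ∈ s, g i = ∑ i ∈ s, ((r i : EReal) - g i) := by
  simp only [sub_eq_add_neg, neg_finset_sum hg, coe_finset_sum, Finset.sum_add_distrib]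

lemma sub_coe_add (a b : EReal) (c : ℝ) : a - (c + b) = a - b - c := by
  rw [sub_eq_add_neg, neg_add (.inl (coe_ne_bot c)) (.inl (coe_ne_top c)), sub_eq_add_neg,
    add_comm (-(c : EReal)), ← add_assoc, ← sub_eq_add_neg, ← sub_eq_add_neg]

lemma iSup_sub_coe {ι : Sort*} (f : ι → EReal) (c : ℝ) :
    ⨆ i, (f i - c) = (⨆ i, f i) - c := by
  refine le_antisymm (iSup_le fun i => sub_le_sub (le_iSup f i) le_rfl) (sub_le_of_le_add ?_)
  refine iSup_le fun i => ?_
  calc f i = (f i - c) + c := sub_add_cancel.symm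
    _ ≤ (⨆ j, (f j - c)) + c := by gcongr; exact le_iSup (fun j => f j - c) i

lemma iSup_add_iSup {ι κ : Sort*} (f : ι → EReal) (g : κ → EReal) :
    (⨆ i, f i) + ⨆ j, g j = ⨆ (i) (j), f i + g j := by
  refine le_antisymm (add_le_of_forall_lt fun a ha b hb => ?_)
    (iSup₂_le fun i j => add_le_add (le_iSup f i) (le_iSup g j))
  obtain ⟨i, hi⟩ := lt_iSup_iff.1 ha
  obtain ⟨j, hj⟩ := lt_iSup_iff.1 hb
  exact (add_le_add hi.le hj.le).trans (le_iSup₂ (f := fun i j => f i + g j) i j)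

lemma iSup_sum_eq_sum_iSup {ι α : Type*} [Fintype ι] [Nonempty α] (F : ι → α → EReal) :
    ⨆ x : ι → α, ∑ i, F i (x i) = ∑ i, ⨆ t, F i t := by
  suffices ∀ s : Finset ι, ⨆ x : ι → α, ∑ i ∈ s, F i (x i) = ∑ i ∈ s, ⨆ t, F i t from this _
  intro s
  induction s using Finset.induction_on with
  | empty => simp
  | insert a s has ih =>
    simp only [Finset.sum_insert has, ← ih, iSup_add_iSup]
    refine le_antisymm (iSup_le fun x => le_iSup₂_of_le (x a) x le_rfl) ?_
    refine iSup₂_le fun t y => le_iSup_of_le (Function.update y a t) ?_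
    rw [Function.update_self]
    gcongr with i hi
    rw [Function.update_of_ne (ne_of_mem_of_not_mem hi has)]

end EReal

lemma conjN_sum {n : ℕ} (φ : Fin n → ℝ → EReal) (hφ : ∀ i t, φ i t ≠ ⊥) (v : Fin n → ℝ) :
    conjN (fun x => ∑ i, φ i (x i)) v = ∑ i, conj (φ i) (v i) := by
  simp only [conjN, conj, EReal.coe_finset_sum_sub_sum _ _ fun i _ => hφ i _]
  exact EReal.iSup_sum_eq_sum_iSup fun i t => ((v i * t : ℝ) : EReal) - φ i t

lemma EConvex.apply_mul_le {h : ℝ → EReal} (hconv : EConvex h) (h0 : h 0 = 0) {a : ℝ}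
    (ha₀ : 0 ≤ a) (ha₁ : a ≤ 1) (x : ℝ) : h (a * x) ≤ a * h x := by
  simpa [h0] using hconv x 0 a (1 - a) ha₀ (by linarith) (by ring)

lemma conj_eq_iSup_ne_zero {h : ℝ → EReal} (hbot : ∀ x, h x ≠ ⊥) (hconv : EConvex h)
    (h0 : h 0 = 0) (hacc : AccPt 0 (Filter.principal (EDom h))) (v : ℝ) :
    conj h v = ⨆ (t) (_ : t ≠ 0), ((v * t : ℝ) : EReal) - h t := by
  obtain ⟨x, ⟨-, hx_dom⟩, hx⟩ := accPt_iff_nhds.1 hacc Set.univ Filter.univ_mem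
  obtain ⟨r, hr⟩ : ∃ r : ℝ, h x = r := ⟨(h x).toReal, (EReal.coe_toReal hx_dom.ne (hbot x)).symm⟩
  have hsegment : ∀ a ∈ Set.Ioo (0 : ℝ) 1,
      ((a * (v * x - r) : ℝ) : EReal) ≤ ⨆ (t) (_ : t ≠ 0), ((v * t : ℝ) : EReal) - h t := by
    rintro a ⟨ha₀, ha₁⟩
    refine le_iSup₂_of_le (a * x) (mul_ne_zero ha₀.ne' hx) ?_
    calc ((a * (v * x - r) : ℝ) : EReal)
        = ((v * (a * x) : ℝ) : EReal) - ((a * r : ℝ) : EReal) := by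
          rw [← EReal.coe_sub]; ring_nf
      _ ≤ _ := by
        refine EReal.sub_le_sub le_rfl ?_
        rw [EReal.coe_mul, ← hr]
        exact hconv.apply_mul_le h0 ha₀.le ha₁.le x
  have hlim : Filter.Tendsto (fun a : ℝ => ((a * (v * x - r) : ℝ) : EReal))
      (nhdsWithin 0 (Set.Ioi 0)) (nhds 0) := by
    refine EReal.tendsto_coe.2 (tendsto_nhdsWithin_of_tendsto_nhds ?_)
    simpa using (continuous_mul_const (v * x - r)).tendsto 0
  have hnonneg := le_of_tendsto hlim (Filter.eventually_of_mem (Ioo_mem_nhdsGT one_pos) hsegment)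
  rw [conj, iSup_split_single _ 0, h0, mul_zero, EReal.coe_zero, zero_sub, neg_zero]
  exact sup_eq_right.2 hnonneg

lemma ind_ne_bot (p : Prop) : ind p ≠ ⊥ := by
  unfold ind; split_ifs <;> simp

lemma ind_and (p q : Prop) : ind (p ∧ q) = ind p + ind q := by
  unfold ind; split_ifs <;> simp_all

lemma ind_forall {ι : Type*} [Fintype ι] (p : ι → Prop) : ind (∀ i, p i) = ∑ i, ind (p i) := by
  suffices ∀ s : Finset ι, ind (∀ i ∈ s, p i) = ∑ i ∈ s, ind (p i) by simpa using this Finset.univ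
  intro s
  induction s using Finset.induction_on with
  | empty => simp [ind]
  | insert a s has ih => rw [Finset.forall_mem_insert, ind_and, ih, Finset.sum_insert has]

lemma coe_mul_norm0N {n : ℕ} (lam : ℝ) (x : Fin n → ℝ) :
    ((lam * (norm0N x : ℝ) : ℝ) : EReal) = ∑ i, ((if x i = 0 then 0 else lam : ℝ) : EReal) := by
  rw [← EReal.coe_finset_sum, norm0N, Finset.card_filter, Nat.cast_sum, Finset.mul_sum]
  congr! 2 with i
  split_ifs <;> simp_all

/-- The `i`-th summand of `gnode`, where `p` and `q` stand for `i ∈ S₀` and `i ∈ S₁`. -/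
def gnodeCoord (h : ℝ → EReal) (lam : ℝ) (p q : Prop) (t : ℝ) : EReal :=
  ((if t = 0 then 0 else lam : ℝ) : EReal) + h t + ind ((p → t = 0) ∧ (q → t ≠ 0))

lemma gnode_eq_sum_gnodeCoord {n : ℕ} (h : ℝ → EReal) (lam : ℝ) (S0 S1 : Finset (Fin n))
    (x : Fin n → ℝ) : gnode h lam S0 S1 x = ∑ i, gnodeCoord h lam (i ∈ S0) (i ∈ S1) (x i) := by
  have hcon : ((∀ i ∈ S0, x i = 0) ∧ ∀ i ∈ S1, x i ≠ 0) ↔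
      ∀ i, (i ∈ S0 → x i = 0) ∧ (i ∈ S1 → x i ≠ 0) := forall_and.symm
  simp only [gnode, gnodeCoord, hcon, ind_forall, coe_mul_norm0N, Finset.sum_add_distrib]

lemma gnodeCoord_ne_bot {h : ℝ → EReal} (hbot : ∀ x, h x ≠ ⊥) (lam : ℝ) (p q : Prop) (t : ℝ) :
    gnodeCoord h lam p q t ≠ ⊥ := by
  simp only [gnodeCoord, ne_eq, EReal.add_eq_bot_iff, EReal.coe_ne_bot, hbot, ind_ne_bot, or_self,
    not_false_eq_true]

lemma conj_gnodeCoord {h : ℝ → EReal} (hbot : ∀ x, h x ≠ ⊥) (hconv : EConvex h)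
    (h0 : h 0 = 0) (hacc : AccPt 0 (Filter.principal (EDom h))) (lam : ℝ) {p q : Prop}
    [Decidable p] [Decidable q] (hpq : ¬(p ∧ q)) (v : ℝ) :
    conj (gnodeCoord h lam p q) v
      = if p then 0 else if q then conj h v - lam else max (conj h v - lam) 0 := by
  have hzero : ((v * 0 : ℝ) : EReal) - gnodeCoord h lam p q 0 = if q then ⊥ else 0 := by
    by_cases hq : q <;> simp [gnodeCoord, h0, ind, hq]
  have hne : ∀ t ≠ 0, ((v * t : ℝ) : EReal) - gnodeCoord h lam p q t
      = if p then ⊥ else ((v * t : ℝ) : EReal) - h t - lam := by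
    intro t ht
    by_cases hp : p
    · simp [gnodeCoord, ind, hp, ht, EReal.add_top_of_ne_bot, hbot]
    · simp [gnodeCoord, ind, hp, ht, EReal.sub_coe_add]
  have hsup : ⨆ (t) (_ : t ≠ 0), (((v * t : ℝ) : EReal) - h t - lam) = conj h v - lam := by
    simp only [EReal.iSup_sub_coe, conj_eq_iSup_ne_zero hbot hconv h0 hacc]
  rw [conj, iSup_split_single _ 0, hzero]
  simp only [iSup_congr fun t => iSup_congr (hne t)]
  by_cases hp : p
  · simp [hp, show ¬q from fun hq => hpq ⟨hp, hq⟩]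
  · simp only [hp, if_false, hsup]
    by_cases hq : q
    · simp only [hq, if_true, bot_sup_eq]
    · simp only [hq, if_false, sup_comm]

theorem stmt_4_general {n : ℕ} (h : ℝ → EReal) (lam : ℝ)
    (hProper : EProper h) (hConvex : EConvex h)
    (h0 : h 0 = 0) (hAcc : AccPt 0 (Filter.principal (EDom h)))
    (S0 S1 : Finset (Fin n))
    (hd01 : Disjoint S0 S1) :
    ∀ v : Fin n → ℝ,
      conjN (gnode h lam S0 S1) v
        = ∑ i, (if i ∈ S0 then (0 : EReal)
            else if i ∈ S1 then conj h (v i) - (lam : EReal)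
            else max (conj h (v i) - (lam : EReal)) 0) := by
  intro v
  have hbot : ∀ x, h x ≠ ⊥ := hProper.1
  have hsep : gnode h lam S0 S1 = fun x => ∑ i, gnodeCoord h lam (i ∈ S0) (i ∈ S1) (x i) :=
    funext (gnode_eq_sum_gnodeCoord h lam S0 S1)
  rw [hsep, conjN_sum _ fun i => gnodeCoord_ne_bot hbot lam _ _]
  exact Finset.sum_congr rfl fun i _ => conj_gnodeCoord hbot hConvex h0 hAcc lam
    (fun hi => Finset.disjoint_left.1 hd01 hi.1 hi.2) (v i)

theorem stmt_4 {n : ℕ} (h : ℝ → EReal) (lam : ℝ) (hlam : 0 < lam)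
    (hProper : EProper h) (hClosed : EClosed h) (hConvex : EConvex h)
    (h0 : h 0 = 0) (hAcc : AccPt 0 (Filter.principal (EDom h)))
    (S0 S1 Sn : Finset (Fin n))
    (hd01 : Disjoint S0 S1) (hd0n : Disjoint S0 Sn) (hd1n : Disjoint S1 Sn)
    (hcover : S0 ∪ S1 ∪ Sn = Finset.univ) :
    ∀ v : Fin n → ℝ,
      conjN (gnode h lam S0 S1) v
        = ∑ i, (if i ∈ S0 then (0 : EReal)
            else if i ∈ S1 then conj h (v i) - (lam : EReal)
            else max (conj h (v i) - (lam : EReal)) 0) :=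
  stmt_4_general h lam hProper hConvex h0 hAcc S0 S1 hd01
end
end

section
/- Let λ, α, M > 0 and h(x) = α|x| + η(|x| ≤ M), so h*(v) = M·max(|v| − α, 0). Then sup_{v ∈ ℝ} (x·v − max(h*(v) − λ, 0)) = (α + λ/M)|x| + η(|x| ≤ M) for all x ∈ ℝ. -/
open Classical

noncomputable section

/-!
Write `h_c t = c |t| + η(|t| ≤ M)`, whose conjugate is `h_c^* v = M max(|v| - c, 0)`. Truncating
`h_α^* - λ` at `0` just shifts the kink of `h_α^*` from `α` to `c = α + λ / M`, i.e.
`max(h_α^* - λ, 0) = h_c^*`. The left-hand side is therefore the biconjugate of `h_c`, and a direct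
computation shows that it equals `h_c`.
-/

lemma ind_of_pos {p : Prop} (hp : p) : ind p = 0 := if_pos hp

lemma ind_of_neg {p : Prop} (hp : ¬p) : ind p = ⊤ := if_neg hp

lemma exists_abs_eq_and_mul_eq (v : ℝ) {c : ℝ} (hc : 0 ≤ c) : ∃ x, |x| = c ∧ v * x = c * |v| := by
  rcases le_total 0 v with hv | hv
  · exact ⟨c, abs_of_nonneg hc, by rw [abs_of_nonneg hv, mul_comm]⟩
  · exact ⟨-c, by rw [abs_neg, abs_of_nonneg hc], by rw [abs_of_nonpos hv]; ring⟩

lemma max_mul_max_sub_sub_eq {M lam : ℝ} (hM : 0 < M) (hlam : 0 ≤ lam) (α s : ℝ) :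
    max (M * max (s - α) 0 - lam) 0 = M * max (s - (α + lam / M)) 0 := by
  rcases le_total s α with hs | hs
  · have hshift : 0 ≤ lam / M := div_nonneg hlam hM.le
    rw [max_eq_right (by linarith : s - α ≤ 0), max_eq_right (by linarith : s - (α + lam / M) ≤ 0),
      mul_zero, max_eq_right (by linarith)]
  · rw [max_eq_left (by linarith : 0 ≤ s - α), mul_max_of_nonneg _ _ hM.le, mul_zero]
    congr 1
    field_simp
    ring

lemma conj_abs_add_ind (α : ℝ) {M : ℝ} (hM : 0 ≤ M) (v : ℝ) :
    conj (fun t => ((α * |t| : ℝ) : EReal) + ind (|t| ≤ M)) v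
      = ((M * max (|v| - α) 0 : ℝ) : EReal) := by
  simp only [conj]
  apply le_antisymm
  · refine iSup_le fun x => ?_
    by_cases hx : |x| ≤ M
    · rw [ind_of_pos hx, add_zero, ← EReal.coe_sub, EReal.coe_le_coe_iff]
      calc v * x - α * |x| ≤ (|v| - α) * |x| := by
            nlinarith [le_abs_self (v * x), abs_mul v x]
        _ ≤ max (|v| - α) 0 * |x| := by gcongr; exact le_max_left _ _
        _ ≤ M * max (|v| - α) 0 := by rw [mul_comm]; gcongr
    · rw [ind_of_neg hx, EReal.add_top_of_ne_bot (EReal.coe_ne_bot _), EReal.sub_top]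
      exact bot_le
  · rcases le_total α |v| with hv | hv
    · obtain ⟨x, hxM, hvx⟩ := exists_abs_eq_and_mul_eq v hM
      refine le_iSup_of_le x (le_of_eq ?_)
      rw [ind_of_pos hxM.le, add_zero, ← EReal.coe_sub, hvx, hxM, max_eq_left (by linarith)]
      ring_nf
    · refine le_iSup_of_le 0 (le_of_eq ?_)
      rw [ind_of_pos (by simpa using hM), add_zero, ← EReal.coe_sub, max_eq_right (by linarith)]
      simp

lemma mul_sub_mul_max_abs_sub_le {M c x : ℝ} (hx : |x| ≤ M) (v : ℝ) :
    x * v - M * max (|v| - c) 0 ≤ c * |x| := by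
  have hxv : x * v ≤ |x| * |v| := (le_abs_self _).trans (abs_mul x v).le
  rcases le_total |v| c with hv | hv
  · nlinarith [abs_nonneg x, le_max_right (|v| - c) 0, le_trans (abs_nonneg x) hx]
  · rw [max_eq_left (by linarith)]
    nlinarith

lemma conj_mul_max_abs_sub {c M : ℝ} (hc : 0 ≤ c) (hM : 0 ≤ M) (x : ℝ) :
    conj (fun v => ((M * max (|v| - c) 0 : ℝ) : EReal)) x
      = ((c * |x| : ℝ) : EReal) + ind (|x| ≤ M) := by
  simp only [conj, ← EReal.coe_sub]
  by_cases hx : |x| ≤ M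
  · rw [ind_of_pos hx, add_zero]
    refine le_antisymm (iSup_le fun v => ?_) ?_
    · exact EReal.coe_le_coe_iff.mpr (mul_sub_mul_max_abs_sub_le hx v)
    · obtain ⟨v, hvc, hxv⟩ := exists_abs_eq_and_mul_eq x hc
      refine le_iSup_of_le v (le_of_eq ?_)
      rw [hxv, hvc, sub_self, max_self, mul_zero, sub_zero]
  · rw [ind_of_neg hx, EReal.add_top_of_ne_bot (EReal.coe_ne_bot _), iSup_eq_top]
    intro b hb
    have hxM : 0 < |x| - M := by linarith [not_le.mp hx]
    -- along `|v| = t`, `xv = t|x|` the objective is at least `t (|x| - M)`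
    set t := max (b.toReal + 1) 0 / (|x| - M)
    have ht : 0 ≤ t := div_nonneg (le_max_right _ _) hxM.le
    obtain ⟨v, hvt, hxv⟩ := exists_abs_eq_and_mul_eq x ht
    refine ⟨v, (EReal.le_coe_toReal hb.ne).trans_lt (EReal.coe_lt_coe_iff.mpr ?_)⟩
    have hpen : M * max (t - c) 0 ≤ M * t := by
      gcongr; exact max_le (by linarith) ht
    have htx : t * (|x| - M) = max (b.toReal + 1) 0 := div_mul_cancel₀ _ hxM.ne'
    rw [hxv, hvt]
    nlinarith [le_max_left (b.toReal + 1) 0]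

theorem stmt_14 (lam α M : ℝ) (hlam : 0 < lam) (hα : 0 < α) (hM : 0 < M) :
    ∀ x : ℝ,
      (⨆ v : ℝ,
          ((x * v : ℝ) : EReal)
            - max (conj (fun t => ((α * |t| : ℝ) : EReal) + ind (|t| ≤ M)) v
                - (lam : EReal)) 0)
        = (((α + lam / M) * |x| : ℝ) : EReal) + ind (|x| ≤ M) := by
  intro x
  have htruncate : ∀ v : ℝ,
      max (conj (fun t => ((α * |t| : ℝ) : EReal) + ind (|t| ≤ M)) v - (lam : EReal)) 0
        = ((M * max (|v| - (α + lam / M)) 0 : ℝ) : EReal) := by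
    intro v
    rw [conj_abs_add_ind α hM.le, ← max_mul_max_sub_sub_eq hM hlam.le]
    norm_cast
  simp only [htruncate]
  exact conj_mul_max_abs_sub (by positivity) hM.le x
end
end

section
/- Let λ, α, M > 0 with M > √(λ/α), and let h(x) = αx² + η(|x| ≤ M). Then sup_{v ∈ ℝ}(x·v − max(h*(v) − λ, 0)) equals: 2√(λα)|x| if |x| ≤ √(λ/α); αx² + λ if √(λ/α) < |x| ≤ M; and +∞ if |x| > M. -/
open Classical

noncomputable section

/-!
Write `h*` for the conjugate of `h(t) = α t² + η(|t| ≤ M)` and `s = √(λ/α)`, so `λ = α s²`.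
Instead of the explicit Huber form of `h*`, only Fenchel–Young bounds in both directions are used:
`v t - α t² ≤ h*(v)` for `|t| ≤ M`, and `h*(v) ≤ min (v²/(4α)) (M |v|)`.
Taking `t = x` bounds the supremum by `α x² + λ`; taking `t = ±s` gives `h*(v) - λ ≥ s |v| - 2λ`,
and averaging this with `0` bounds it by `2 α s |x|` when `|x| ≤ s`. The upper bounds on `h*`
show that `v = 2 α s · sign x`, resp. `v = 2 α x`, attain these values, and that `v = n x` makes
the objective grow linearly in `n` when `|x| > M`.
-/

def sqAddInd (α M t : ℝ) : EReal := ((α * t ^ 2 : ℝ) : EReal) + ind (|t| ≤ M)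

section Conjugate

variable {α M v : ℝ}

lemma coe_le_conj_sqAddInd {t : ℝ} (ht : |t| ≤ M) :
    ((v * t - α * t ^ 2 : ℝ) : EReal) ≤ conj (sqAddInd α M) v :=
  le_iSup_of_le t <| by simp [sqAddInd, ind, ht, EReal.coe_sub]

lemma conj_sqAddInd_le {c : ℝ} (h : ∀ t, |t| ≤ M → v * t - α * t ^ 2 ≤ c) :
    conj (sqAddInd α M) v ≤ c := by
  refine iSup_le fun t => ?_
  by_cases ht : |t| ≤ M
  · simpa only [sqAddInd, ind, if_pos ht, add_zero, ← EReal.coe_sub, EReal.coe_le_coe_iff]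
      using h t ht
  · simp only [sqAddInd, ind, if_neg ht, EReal.coe_add_top, EReal.sub_top, bot_le]

lemma conj_sqAddInd_le_sq_div (hα : 0 < α) :
    conj (sqAddInd α M) v ≤ ((v ^ 2 / (4 * α) : ℝ) : EReal) :=
  conj_sqAddInd_le fun t _ => by
    rw [le_div_iff₀ (by positivity)]
    nlinarith [sq_nonneg (2 * α * t - v)]

lemma conj_sqAddInd_le_mul_abs (hα : 0 ≤ α) :
    conj (sqAddInd α M) v ≤ ((M * |v| : ℝ) : EReal) :=
  conj_sqAddInd_le fun t ht => by
    linarith [le_abs_self (v * t), abs_mul v t, mul_le_mul_of_nonneg_left ht (abs_nonneg v),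
      mul_nonneg hα (sq_nonneg t)]

lemma coe_toReal_conj_sqAddInd (hα : 0 < α) (hM : 0 ≤ M) :
    (((conj (sqAddInd α M) v).toReal : ℝ) : EReal) = conj (sqAddInd α M) v := by
  have h0 : ((0 : ℝ) : EReal) ≤ conj (sqAddInd α M) v := by
    simpa using coe_le_conj_sqAddInd (α := α) (v := v) (t := 0) (by simpa using hM)
  exact EReal.coe_toReal (ne_top_of_le_ne_top (EReal.coe_ne_top _) (conj_sqAddInd_le_sq_div hα))
    (ne_bot_of_le_ne_bot (EReal.coe_ne_bot _) h0)

end Conjugate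

lemma EReal.iSup_coe_eq_coe {ι : Sort*} {f : ι → ℝ} {m : ℝ} (hle : ∀ i, f i ≤ m)
    (hge : ∃ i, m ≤ f i) : ⨆ i, (f i : EReal) = m := by
  obtain ⟨i, hi⟩ := hge
  exact le_antisymm (iSup_le fun j => EReal.coe_le_coe_iff.2 (hle j))
    (le_iSup_of_le i (EReal.coe_le_coe_iff.2 hi))

lemma EReal.iSup_coe_eq_top {ι : Sort*} {f : ι → ℝ} (h : ∀ b : ℝ, ∃ i, b < f i) :
    ⨆ i, (f i : EReal) = ⊤ := by
  refine iSup_eq_top.2 fun b hb => ?_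
  obtain ⟨c, hbc, -⟩ := EReal.exists_between_coe_real hb
  obtain ⟨i, hi⟩ := h c
  exact ⟨i, hbc.trans (EReal.coe_lt_coe_iff.2 hi)⟩

section Truncated

variable {H : ℝ → ℝ} {α M lam s x : ℝ}

lemma mul_sub_max_le_of_abs_le (hlow : ∀ v t, |t| ≤ M → v * t - α * t ^ 2 ≤ H v)
    (hx : |x| ≤ M) (v : ℝ) : x * v - max (H v - lam) 0 ≤ α * x ^ 2 + lam := by
  have := hlow v x hx
  have := le_max_left (H v - lam) 0
  linarith

lemma mul_sub_max_le_of_abs_le_root (hlow : ∀ v t, |t| ≤ M → v * t - α * t ^ 2 ≤ H v)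
    (hs : 0 < s) (hsM : s ≤ M) (hx : |x| ≤ s) (v : ℝ) :
    x * v - max (H v - α * s ^ 2) 0 ≤ 2 * α * s * |x| := by
  have hH : |v| * s - α * s ^ 2 ≤ H v := by
    rcases abs_choice v with h | h <;> rw [h]
    · exact hlow v s (by rwa [abs_of_pos hs])
    · simpa using hlow v (-s) (by rwa [abs_neg, abs_of_pos hs])
  -- `max a 0 ≥ (|x| / s) • a + (1 - |x| / s) • 0`
  have hmax : |x| * (H v - α * s ^ 2) ≤ s * max (H v - α * s ^ 2) 0 := by
    nlinarith [le_max_left (H v - α * s ^ 2) 0, le_max_right (H v - α * s ^ 2) 0, abs_nonneg x]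
  have hxv : x * v ≤ |x| * |v| := (le_abs_self _).trans (abs_mul x v).le
  refine le_of_mul_le_mul_left ?_ hs
  nlinarith [abs_nonneg x]

lemma exists_two_mul_abs_le_mul_sub_max (hα : 0 < α) (hquad : ∀ v, H v ≤ v ^ 2 / (4 * α)) (x : ℝ) :
    ∃ v, 2 * α * s * |x| ≤ x * v - max (H v - α * s ^ 2) 0 := by
  have hzero : ∀ v, v ^ 2 = (2 * α * s) ^ 2 → max (H v - α * s ^ 2) 0 = 0 := fun v hv =>
    max_eq_right <| by
      have h := hquad v
      rw [hv, show (2 * α * s) ^ 2 / (4 * α) = α * s ^ 2 by field_simp; ring] at h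
      linarith
  rcases abs_choice x with h | h
  · exact ⟨2 * α * s, by rw [hzero _ rfl, h]; linarith⟩
  · exact ⟨-(2 * α * s), by rw [hzero _ (neg_sq _), h]; linarith⟩

lemma le_mul_sub_max_of_le_sq (hα : 0 < α) (hquad : ∀ v, H v ≤ v ^ 2 / (4 * α))
    (hx : lam ≤ α * x ^ 2) :
    α * x ^ 2 + lam ≤ x * (2 * α * x) - max (H (2 * α * x) - lam) 0 := by
  have h := hquad (2 * α * x)
  rw [show (2 * α * x) ^ 2 / (4 * α) = α * x ^ 2 by field_simp; ring] at h
  have : max (H (2 * α * x) - lam) 0 ≤ α * x ^ 2 - lam := max_le (by linarith) (by linarith)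
  nlinarith

lemma exists_lt_mul_sub_max (hlin : ∀ v, H v ≤ M * |v|) (hM : 0 ≤ M) (hlam : 0 ≤ lam)
    (hx : M < |x|) (b : ℝ) : ∃ v, b < x * v - max (H v - lam) 0 := by
  have hc : 0 < |x| * (|x| - M) := mul_pos (hM.trans_lt hx) (sub_pos.2 hx)
  obtain ⟨n, hn⟩ := exists_nat_gt (b / (|x| * (|x| - M)))
  refine ⟨n * x, ?_⟩
  have hmax : max (H (n * x) - lam) 0 ≤ M * (n * |x|) := by
    have h := hlin (n * x)
    rw [abs_mul, Nat.abs_cast] at h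
    exact max_le (by linarith) (by positivity)
  have hb : b < n * (|x| * (|x| - M)) := by rwa [div_lt_iff₀ hc] at hn
  have hxx : x * (n * x) = n * |x| ^ 2 := by rw [sq_abs]; ring
  nlinarith

end Truncated

theorem stmt_17_general (lam α M : ℝ) (hlam : 0 < lam) (hα : 0 < α)
    (hMgt : Real.sqrt (lam / α) < M) :
    ∀ x : ℝ,
      (⨆ v : ℝ,
          ((x * v : ℝ) : EReal)
            - max (conj (fun t => ((α * t ^ 2 : ℝ) : EReal) + ind (|t| ≤ M)) v
                - (lam : EReal)) 0)
        = if |x| ≤ Real.sqrt (lam / α) then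
            ((2 * Real.sqrt (lam * α) * |x| : ℝ) : EReal)
          else if |x| ≤ M then ((α * x ^ 2 + lam : ℝ) : EReal)
          else ⊤ := by
  intro x
  set s := Real.sqrt (lam / α)
  have hs : 0 < s := Real.sqrt_pos.2 (by positivity)
  have hM : 0 ≤ M := hs.le.trans hMgt.le
  have hlam_eq : lam = α * s ^ 2 := by rw [Real.sq_sqrt (by positivity)]; field_simp
  have hroot : Real.sqrt (lam * α) = α * s := by
    rw [hlam_eq, show α * s ^ 2 * α = (α * s) ^ 2 by ring, Real.sqrt_sq (by positivity)]
  set H : ℝ → ℝ := fun v => (conj (sqAddInd α M) v).toReal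
  have hH : ∀ v, (H v : EReal) = conj (sqAddInd α M) v := fun v => coe_toReal_conj_sqAddInd hα hM
  have hlow : ∀ v t, |t| ≤ M → v * t - α * t ^ 2 ≤ H v := fun v t ht =>
    EReal.coe_le_coe_iff.1 ((hH v).symm ▸ coe_le_conj_sqAddInd ht)
  have hquad : ∀ v, H v ≤ v ^ 2 / (4 * α) := fun v =>
    EReal.coe_le_coe_iff.1 ((hH v).symm ▸ conj_sqAddInd_le_sq_div hα)
  have hlin : ∀ v, H v ≤ M * |v| := fun v =>
    EReal.coe_le_coe_iff.1 ((hH v).symm ▸ conj_sqAddInd_le_mul_abs hα.le)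
  have hsummand : ∀ v, ((x * v : ℝ) : EReal) - max (conj (sqAddInd α M) v - lam) 0
      = ((x * v - max (H v - lam) 0 : ℝ) : EReal) := fun v => by
    rw [EReal.coe_sub, EReal.coe_strictMono.monotone.map_max, EReal.coe_sub, hH, EReal.coe_zero]
  change ⨆ v : ℝ, ((x * v : ℝ) : EReal) - max (conj (sqAddInd α M) v - lam) 0 = _
  simp only [hsummand]
  split_ifs with hxs hxM
  · rw [hroot, hlam_eq, ← mul_assoc]
    exact EReal.iSup_coe_eq_coe (mul_sub_max_le_of_abs_le_root hlow hs hMgt.le hxs)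
      (exists_two_mul_abs_le_mul_sub_max hα hquad x)
  · have hsx : lam ≤ α * x ^ 2 := by
      rw [hlam_eq, ← sq_abs x]
      exact mul_le_mul_of_nonneg_left (pow_le_pow_left₀ hs.le (not_le.1 hxs).le 2) hα.le
    exact EReal.iSup_coe_eq_coe (mul_sub_max_le_of_abs_le hlow hxM)
      ⟨2 * α * x, le_mul_sub_max_of_le_sq hα hquad hsx⟩
  · exact EReal.iSup_coe_eq_top (exists_lt_mul_sub_max hlin hM hlam.le (not_le.1 hxM))

theorem stmt_17 (lam α M : ℝ) (hlam : 0 < lam) (hα : 0 < α) (hM : 0 < M)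
    (hMgt : Real.sqrt (lam / α) < M) :
    ∀ x : ℝ,
      (⨆ v : ℝ,
          ((x * v : ℝ) : EReal)
            - max (conj (fun t => ((α * t ^ 2 : ℝ) : EReal) + ind (|t| ≤ M)) v
                - (lam : EReal)) 0)
        = if |x| ≤ Real.sqrt (lam / α) then
            ((2 * Real.sqrt (lam * α) * |x| : ℝ) : EReal)
          else if |x| ≤ M then ((α * x ^ 2 + lam : ℝ) : EReal)
          else ⊤ :=
  stmt_17_general lam α M hlam hα hMgt
end
end
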